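/- arXiv:2503.00608 — 2 statements merged into one kernel-verified Lean document; each statement's English description precedes it below -/
import Mathlib

section
/- Let W = softmax(QKᵀ) where Q, K ∈ ℝ^{n×d}, i.e., W_{ij} = exp(qᵢ·kⱼ)/Σ_{s=1}^n exp(qᵢ·k_s) with qᵢ, kⱼ the rows of Q and K. Suppose [n] is partitioned into sets I₁,...,I_ℓ such that whenever i, i' lie in the same part, ‖qᵢ - q_{i'}‖₂ ≤ δ and ‖kᵢ - k_{i'}‖₂ ≤ δ, and let R = max(max_i ‖qᵢ‖₂, max_j ‖kⱼ‖₂). If 4δR ≤ 1/35, then for any i, i' in the same part and j, j' in the same part, |W_{ij}/W_{i'j'} - 1| ≤ 17δR. -/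
/-!
Each logit `⟪qᵢ, kⱼ⟫` moves by at most `2δR` when `i` and `j` are replaced by indices in the same
parts, and every logit of row `i` moves by at most `δR` when `i` is replaced by `i'`, so the
softmax normalisers of the two rows agree up to a factor `e^{δR}`. Hence `W_{ij} / W_{i'j'}` lies
in `[e^{-3δR}, e^{3δR}]`, and for `δR ≤ 1/140` this interval sits inside `[1 - 17δR, 1 + 17δR]`.
-/

open Real Finset

noncomputable def softmax {ι : Type*} [Fintype ι] (x : ι → ℝ) (j : ι) : ℝ :=
  exp (x j) / ∑ s, exp (x s)

theorem abs_inner_sub_inner_le_of_norm_sub_le {E : Type*} [NormedAddCommGroup E]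
    [InnerProductSpace ℝ E] {a a' b b' : E} {δ δ' R : ℝ} (ha : ‖a - a'‖ ≤ δ)
    (hb : ‖b - b'‖ ≤ δ') (hbR : ‖b‖ ≤ R) (ha'R : ‖a'‖ ≤ R) :
    |inner ℝ a b - inner ℝ a' b'| ≤ (δ + δ') * R := by
  have hsplit : inner ℝ a b - inner ℝ a' b' = inner ℝ (a - a') b + inner ℝ a' (b - b') := by
    rw [inner_sub_left, inner_sub_right]; ring
  have h₁ : ‖a - a'‖ * ‖b‖ ≤ δ * R :=
    mul_le_mul ha hbR (norm_nonneg _) ((norm_nonneg _).trans ha)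
  have h₂ : ‖a'‖ * ‖b - b'‖ ≤ R * δ' :=
    mul_le_mul ha'R hb (norm_nonneg _) ((norm_nonneg _).trans ha'R)
  calc |inner ℝ a b - inner ℝ a' b'|
      ≤ |inner ℝ (a - a') b| + |inner ℝ a' (b - b')| := hsplit ▸ abs_add_le _ _
    _ ≤ ‖a - a'‖ * ‖b‖ + ‖a'‖ * ‖b - b'‖ :=
      add_le_add (abs_real_inner_le_norm _ _) (abs_real_inner_le_norm _ _)
    _ ≤ (δ + δ') * R := by linarith

section Softmax

variable {ι : Type*} [Fintype ι] {x y : ι → ℝ} {c c' : ℝ}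

theorem sum_exp_le_exp_mul_sum_exp (hxy : ∀ s, y s ≤ x s + c) :
    ∑ s, exp (y s) ≤ exp c * ∑ s, exp (x s) := by
  rw [mul_sum]
  gcongr with s
  rw [← exp_add, add_comm c]
  exact exp_le_exp.mpr (hxy s)

theorem sum_exp_pos (j : ι) : 0 < ∑ s, exp (x s) :=
  sum_pos (fun _ _ ↦ exp_pos _) ⟨j, mem_univ j⟩

theorem softmax_pos (j : ι) : 0 < softmax x j :=
  div_pos (exp_pos _) (sum_exp_pos j)

theorem softmax_div_softmax_le {j j' : ι} (hxy : ∀ s, y s ≤ x s + c) (hj : x j ≤ y j' + c') :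
    softmax x j / softmax y j' ≤ exp (c' + c) := by
  have hnum : exp (x j) ≤ exp (y j') * exp c' := by
    rw [← exp_add]; exact exp_le_exp.mpr hj
  rw [softmax, softmax, div_div_div_eq, div_le_iff₀ (mul_pos (sum_exp_pos j) (exp_pos _))]
  calc exp (x j) * ∑ s, exp (y s)
      ≤ (exp (y j') * exp c') * (exp c * ∑ s, exp (x s)) :=
        mul_le_mul hnum (sum_exp_le_exp_mul_sum_exp hxy) (sum_exp_pos j').le (by positivity)
    _ = exp (c' + c) * ((∑ s, exp (x s)) * exp (y j')) := by rw [exp_add]; ring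

theorem softmax_div_softmax_mem_Icc {j j' : ι} (hxy : ∀ s, |x s - y s| ≤ c)
    (hj : |x j - y j'| ≤ c') :
    softmax x j / softmax y j' ∈ Set.Icc (exp (-(c' + c))) (exp (c' + c)) := by
  refine ⟨?_, softmax_div_softmax_le (fun s ↦ ?_) (by linarith [(abs_le.mp hj).2])⟩
  · have hinv : softmax y j' / softmax x j ≤ exp (c' + c) :=
      softmax_div_softmax_le (fun s ↦ by linarith [(abs_le.mp (hxy s)).2])
        (by linarith [(abs_le.mp hj).1])
    rw [exp_neg, ← inv_div]
    exact inv_anti₀ (div_pos (softmax_pos j') (softmax_pos j)) hinv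
  · linarith [(abs_le.mp (hxy s)).1]

end Softmax

theorem abs_sub_one_le_of_mem_Icc_exp {r c : ℝ} (hc : c ≤ 1 / 140)
    (hr : r ∈ Set.Icc (exp (-(3 * c))) (exp (3 * c))) : |r - 1| ≤ 17 * c := by
  have hc₀ : 0 ≤ c := by
    have := exp_le_exp.mp (hr.1.trans hr.2); linarith
  have hlo : 1 - 3 * c ≤ exp (-(3 * c)) := by linarith [add_one_le_exp (-(3 * c))]
  -- `e^t ≤ 1 / (1 - t)` and `1 / (1 - 3c) ≤ 1 + 17c` as `51 c² ≤ 14 c`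
  have hhi : exp (3 * c) ≤ 1 + 17 * c := by
    refine (exp_bound_div_one_sub_of_interval (by linarith) (by linarith)).trans ?_
    rw [div_le_iff₀ (by linarith)]
    nlinarith
  rw [abs_le]
  constructor <;> linarith [hr.1, hr.2]

theorem stmt7_general (n d ℓ : ℕ) (q k : Fin n → EuclideanSpace ℝ (Fin d))
    (part : Fin n → Fin ℓ) (δ R : ℝ)
    (hqR : ∀ i, ‖q i‖ ≤ R) (hkR : ∀ j, ‖k j‖ ≤ R)
    (hqpart : ∀ i i', part i = part i' → ‖q i - q i'‖ ≤ δ)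
    (hkpart : ∀ j j', part j = part j' → ‖k j - k j'‖ ≤ δ)
    (hsmall : 4 * δ * R ≤ 1 / 35)
    (W : Fin n → Fin n → ℝ)
    (hW : ∀ i j, W i j =
      Real.exp (inner ℝ (q i) (k j) : ℝ) / ∑ s, Real.exp (inner ℝ (q i) (k s) : ℝ)) :
    ∀ i i' j j', part i = part i' → part j = part j' →
      |W i j / W i' j' - 1| ≤ 17 * δ * R := by
  intro i i' j j' hii hjj
  have hrow : ∀ s, |inner ℝ (q i) (k s) - inner ℝ (q i') (k s)| ≤ δ * R := fun s ↦ by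
    simpa using abs_inner_sub_inner_le_of_norm_sub_le (hqpart i i' hii)
      (by simp : ‖k s - k s‖ ≤ 0) (hkR s) (hqR i')
  have hentry : |inner ℝ (q i) (k j) - inner ℝ (q i') (k j')| ≤ 2 * (δ * R) := by
    have := abs_inner_sub_inner_le_of_norm_sub_le (hqpart i i' hii) (hkpart j j' hjj)
      (hkR j) (hqR i')
    linarith
  have hratio := softmax_div_softmax_mem_Icc hrow hentry
  rw [show 2 * (δ * R) + δ * R = 3 * (δ * R) by ring] at hratio
  rw [hW, hW, mul_assoc]
  exact abs_sub_one_le_of_mem_Icc_exp (by linarith) hratio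

/-- Let `W = softmax(QKᵀ)` with rows `qᵢ`, `kⱼ`. If `[n]` is partitioned so that
indices in the same part have query (resp. key) rows within distance `δ`, all rows
have norm at most `R`, and `4δR ≤ 1/35`, then for `i, i'` in the same part and
`j, j'` in the same part, `|W_{ij}/W_{i'j'} - 1| ≤ 17δR`. -/
theorem stmt7 (n d ℓ : ℕ) (q k : Fin n → EuclideanSpace ℝ (Fin d))
    (part : Fin n → Fin ℓ) (δ R : ℝ) (hδ : 0 ≤ δ)
    (hqR : ∀ i, ‖q i‖ ≤ R) (hkR : ∀ j, ‖k j‖ ≤ R)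
    (hqpart : ∀ i i', part i = part i' → ‖q i - q i'‖ ≤ δ)
    (hkpart : ∀ j j', part j = part j' → ‖k j - k j'‖ ≤ δ)
    (hsmall : 4 * δ * R ≤ 1 / 35)
    (W : Fin n → Fin n → ℝ)
    (hW : ∀ i j, W i j =
      Real.exp (inner ℝ (q i) (k j) : ℝ) / ∑ s, Real.exp (inner ℝ (q i) (k s) : ℝ)) :
    ∀ i i' j j', part i = part i' → part j = part j' →
      |W i j / W i' j' - 1| ≤ 17 * δ * R :=
  stmt7_general n d ℓ q k part δ R hqR hkR hqpart hkpart hsmall W hW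
end

section
/- Let W = softmax(QKᵀ) with Q, K ∈ ℝ^{n×d}, and fix representatives i₁ ∈ I₁, ..., i_ℓ ∈ I_ℓ of a partition of [n]. Define W' ∈ ℝ^{n×n} by W'_{ij} = exp(q_{m}·k_{m'})/Σ_s exp(q_m·k_s) where i ∈ I_m and j ∈ I_{m'} (using representatives' rows q_m, k_{m'} appropriately as in a rank-one-per-pair construction). Then W' has non-negative rank at most ℓ(ℓ+1)/2; concretely, W' = AB^⊤ for explicit entrywise-nonnegative matrices A, B ∈ ℝ_{≥0}^{n × ℓ(ℓ+1)/2}. -/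
/-!
Every row of `W'` is a softmax row `softmax(q_m Kᵀ)` sampled at the representatives'
columns, and it depends on `i` only through its part `m`. Hence `W' = E F` with `E` the
`n × ℓ` part-indicator matrix and `F` the `ℓ × n` matrix of these rows, both entrywise
nonnegative, so the non-negative rank of `W'` is at most `ℓ ≤ ℓ(ℓ+1)/2`.
-/

open Matrix Function

namespace Matrix

variable {m n κ : Type*}

def HasNonnegFactorization [Fintype n] (W : Matrix m n ℝ) (r : ℕ) : Prop :=
  ∃ A : Matrix m (Fin r) ℝ, ∃ B : Matrix n (Fin r) ℝ,
    (∀ i s, 0 ≤ A i s) ∧ (∀ j s, 0 ≤ B j s) ∧ W = A * Bᵀ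

lemma mul_apply_nonneg [Fintype κ] {A : Matrix m κ ℝ} {B : Matrix κ n ℝ} (hA : ∀ i s, 0 ≤ A i s)
    (hB : ∀ s j, 0 ≤ B s j) (i : m) (j : n) : 0 ≤ (A * B) i j :=
  Finset.sum_nonneg fun s _ => mul_nonneg (hA i s) (hB s j)

lemma one_submatrix_apply_nonneg [DecidableEq κ] (f : m → κ) (g : n → κ) (i : m) (j : n) :
    0 ≤ (1 : Matrix κ κ ℝ).submatrix f g i j := by
  rw [submatrix_apply, one_apply]
  split_ifs <;> norm_num

/-- Both factors are padded with zero columns outside the range of `e`. -/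
lemma hasNonnegFactorization_mul_transpose [Fintype κ] [Fintype n] {r : ℕ} {e : κ → Fin r}
    (he : Injective e) {A : Matrix m κ ℝ} {B : Matrix n κ ℝ} (hA : ∀ i s, 0 ≤ A i s)
    (hB : ∀ j s, 0 ≤ B j s) : HasNonnegFactorization (A * Bᵀ) r := by
  classical
  set P : Matrix κ (Fin r) ℝ := (1 : Matrix (Fin r) (Fin r) ℝ).submatrix e id
  have hP : P * Pᵀ = 1 := by
    have h := mul_submatrix_one (Equiv.refl (Fin r)) e P
    rw [Equiv.coe_refl, Equiv.refl_symm, Equiv.coe_refl, id_comp] at h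
    rw [transpose_submatrix, transpose_one, h, submatrix_submatrix]
    exact submatrix_one _ he
  refine ⟨A * P, B * P, mul_apply_nonneg hA (one_submatrix_apply_nonneg _ _),
    mul_apply_nonneg hB (one_submatrix_apply_nonneg _ _), ?_⟩
  rw [transpose_mul, Matrix.mul_assoc, ← Matrix.mul_assoc P, hP, Matrix.one_mul]

end Matrix

lemma le_mul_succ_div_two (ℓ : ℕ) : ℓ ≤ ℓ * (ℓ + 1) / 2 := by
  rw [Nat.le_div_iff_mul_le two_pos]
  rcases ℓ with _ | ℓ
  · rfl
  · exact Nat.mul_le_mul_left _ (by omega)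

theorem stmt8_general (n d ℓ : ℕ) (q k : Fin n → EuclideanSpace ℝ (Fin d))
    (part : Fin n → Fin ℓ) (rep : Fin ℓ → Fin n)
    (W' : Matrix (Fin n) (Fin n) ℝ)
    (hW' : ∀ i j, W' i j =
      Real.exp (inner ℝ (q (rep (part i))) (k (rep (part j))) : ℝ) /
        ∑ s, Real.exp (inner ℝ (q (rep (part i))) (k s) : ℝ)) :
    ∃ A B : Matrix (Fin n) (Fin (ℓ * (ℓ + 1) / 2)) ℝ,
      (∀ i r, 0 ≤ A i r) ∧ (∀ j r, 0 ≤ B j r) ∧ W' = A * B.transpose := by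
  set F : Matrix (Fin ℓ) (Fin n) ℝ := of fun m j =>
    Real.exp (inner ℝ (q (rep m)) (k (rep (part j)))) /
      ∑ s, Real.exp (inner ℝ (q (rep m)) (k s))
  have hF : ∀ j m, 0 ≤ Fᵀ j m := fun j m => by
    simp only [F, transpose_apply, of_apply]
    positivity
  have hW : W' = (1 : Matrix (Fin ℓ) (Fin ℓ) ℝ).submatrix part id * Fᵀᵀ := by
    have h := one_submatrix_mul part (Equiv.refl (Fin ℓ)) F
    rw [Equiv.refl_symm, Equiv.coe_refl, id_comp] at h
    rw [transpose_transpose, h]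
    ext i j
    exact hW' i j
  rw [hW]
  exact hasNonnegFactorization_mul_transpose (Fin.castLE_injective (le_mul_succ_div_two ℓ))
    (one_submatrix_apply_nonneg _ _) hF

/-- Fix a partition of `[n]` with representatives `rep m ∈ I_m`, and define
`W'_{ij} = exp(q_m · k_{m'}) / Σ_s exp(q_m · k_s)` where `m, m'` are the parts of
`i, j` (using the representatives' rows). Then `W'` has non-negative rank at most
`ℓ(ℓ+1)/2`: concretely `W' = A Bᵀ` for entrywise-nonnegative
`A, B ∈ ℝ_{≥0}^{n × ℓ(ℓ+1)/2}`. -/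
theorem stmt8 (n d ℓ : ℕ) (q k : Fin n → EuclideanSpace ℝ (Fin d))
    (part : Fin n → Fin ℓ) (rep : Fin ℓ → Fin n) (hrep : ∀ m, part (rep m) = m)
    (W' : Matrix (Fin n) (Fin n) ℝ)
    (hW' : ∀ i j, W' i j =
      Real.exp (inner ℝ (q (rep (part i))) (k (rep (part j))) : ℝ) /
        ∑ s, Real.exp (inner ℝ (q (rep (part i))) (k s) : ℝ)) :
    ∃ A B : Matrix (Fin n) (Fin (ℓ * (ℓ + 1) / 2)) ℝ,
      (∀ i r, 0 ≤ A i r) ∧ (∀ j r, 0 ≤ B j r) ∧ W' = A * B.transpose :=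
  stmt8_general n d ℓ q k part rep W' hW'
end
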